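/- arXiv:2602.11366 — 6 statements merged into one kernel-verified Lean document; each statement's English description precedes it below -/
import Mathlib

section
/- For positive reals M ≥ 0, m_a, m_b > 0 and nonnegative reals w_a, w_b, the difference (w_b·m_b/(M+m_b) + w_a·m_a/(M+m_b+m_a)) − (w_a·m_a/(M+m_a) + w_b·m_b/(M+m_a+m_b)) equals (m_a·m_b/(M+m_a+m_b)) · (w_b/(M+m_b) − w_a/(M+m_a)). In particular, swapping two adjacent right-aligned blocks a (on top of b) increases the overhang exactly when w_b/(M+m_b) > w_a/(M+m_a). -/
/-- Swap identity for two adjacent right-aligned blocks, and the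
resulting criterion for when the swap strictly increases the overhang. -/
theorem swap_identity (M ma mb wa wb : ℝ) (hM : 0 ≤ M) (hma : 0 < ma) (hmb : 0 < mb)
    (hwa : 0 ≤ wa) (hwb : 0 ≤ wb) :
    (wb * mb / (M + mb) + wa * ma / (M + mb + ma))
      - (wa * ma / (M + ma) + wb * mb / (M + ma + mb))
      = (ma * mb / (M + ma + mb)) * (wb / (M + mb) - wa / (M + ma)) ∧
    (0 < (wb * mb / (M + mb) + wa * ma / (M + mb + ma))
          - (wa * ma / (M + ma) + wb * mb / (M + ma + mb))
        ↔ wa / (M + ma) < wb / (M + mb)) := by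
  have ha : (0:ℝ) < M + ma := by linarith
  have hb : (0:ℝ) < M + mb := by linarith
  have hab : (0:ℝ) < M + ma + mb := by linarith
  have hid : (wb * mb / (M + mb) + wa * ma / (M + mb + ma))
      - (wa * ma / (M + ma) + wb * mb / (M + ma + mb))
      = (ma * mb / (M + ma + mb)) * (wb / (M + mb) - wa / (M + ma)) := by
    have : M + mb + ma = M + ma + mb := by ring
    rw [this]
    field_simp
    ring
  refine ⟨hid, ?_⟩
  rw [hid]
  have hpos : 0 < ma * mb / (M + ma + mb) := by positivity
  constructor
  · intro h
    by_contra hle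
    push_neg at hle
    nlinarith
  · intro h
    have : 0 < wb / (M + mb) - wa / (M + ma) := by linarith
    positivity
end

section
/- Let A = {a_1,…,a_n} be positive integers with Σ a_i = 2T, T ≥ 1. Define m_* = 1/4, m_• = 1, w_• = (2T + 5/4)^5, w_* = 4·w_•·(1 − 1/(T + 5/4))^2, O_min(C) = w_*(2 − m_*/(C+m_*)) + w_•·m_•/(C+m_*+m_•) + (2T−C)/(2T+m_*+m_•), and O_max(C) = w_*(2 − m_*/(C+m_*)) + w_•·m_•/(C+m_*+m_•) + Σ_{i=1}^{2T−C} 1/(C+m_*+m_•+i). Then for all integers K with 1 ≤ K ≤ T, O_min(T) > O_max(T+K) and O_min(T) > O_max(T−K). -/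
/-!
The weights are tuned so that the term shared by `O_min(C)` and `O_max(C)` has a strict maximum
at `C = T`: its loss at `C` is `w_•(C - T)^2` over a denominator at most
`(2T + 5/4)^4`, hence at least `2T + 5/4` whenever `C ≠ T`. The remaining blocks contribute
between `0` and `2T`, which is not enough to make up for that loss.
-/

open Finset

/-- `balanceOverhang w_• T C` is the term `w_*(2 - m_*/(C+m_*)) + w_•·m_•/(C+m_*+m_•)` common to
`O_min(C)` and `O_max(C)`. -/
noncomputable def balanceOverhang (w t c : ℝ) : ℝ :=
  4 * w * (1 - 1 / (t + 5 / 4)) ^ 2 * (2 - 1 / 4 / (c + 1 / 4)) + w * 1 / (c + 1 / 4 + 1)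

/-- The factor `4 (1 - 1/(t + 5/4))^2` makes `c = t` a critical point, so the loss is quadratic. -/
lemma balanceOverhang_sub {t c : ℝ} (w : ℝ) (ht : 0 ≤ t) (hc : 0 ≤ c) :
    balanceOverhang w t t - balanceOverhang w t c =
      w * (c - t) ^ 2 / ((t + 5 / 4) ^ 2 * ((c + 5 / 4) * (c + 1 / 4))) := by
  unfold balanceOverhang
  have : t + 1 / 4 ≠ 0 := by positivity
  have : t + 5 / 4 ≠ 0 := by positivity
  have : c + 1 / 4 ≠ 0 := by positivity
  have : c + 5 / 4 ≠ 0 := by positivity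
  field_simp
  ring

lemma le_balanceOverhang_sub {t c : ℝ} (hc₀ : 0 ≤ c) (hc : c ≤ 2 * t)
    (hct : 1 ≤ (c - t) ^ 2) :
    2 * t + 5 / 4 ≤
      balanceOverhang ((2 * t + 5 / 4) ^ 5) t t - balanceOverhang ((2 * t + 5 / 4) ^ 5) t c := by
  have ht : 0 ≤ t := by linarith
  rw [balanceOverhang_sub _ ht hc₀, le_div_iff₀ (by positivity)]
  have hden : (t + 5 / 4) ^ 2 * ((c + 5 / 4) * (c + 1 / 4)) ≤ (2 * t + 5 / 4) ^ 4 := by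
    calc (t + 5 / 4) ^ 2 * ((c + 5 / 4) * (c + 1 / 4))
        ≤ (2 * t + 5 / 4) ^ 2 * ((2 * t + 5 / 4) * (2 * t + 5 / 4)) := by
          gcongr <;> linarith
      _ = (2 * t + 5 / 4) ^ 4 := by ring
  calc (2 * t + 5 / 4) * ((t + 5 / 4) ^ 2 * ((c + 5 / 4) * (c + 1 / 4)))
      ≤ (2 * t + 5 / 4) * (2 * t + 5 / 4) ^ 4 := by gcongr
    _ = (2 * t + 5 / 4) ^ 5 * 1 := by ring
    _ ≤ (2 * t + 5 / 4) ^ 5 * (c - t) ^ 2 := by gcongr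

lemma sum_Icc_one_div_add_le {x : ℝ} (hx : 0 ≤ x) (n : ℕ) :
    ∑ i ∈ Icc 1 n, 1 / (x + i) ≤ n := by
  calc ∑ i ∈ Icc 1 n, 1 / (x + i) ≤ ∑ _i ∈ Icc 1 n, (1 : ℝ) := by
        refine sum_le_sum fun i hi => ?_
        have hi : (1 : ℝ) ≤ i := by exact_mod_cast (mem_Icc.mp hi).1
        rw [div_le_one (by positivity)]
        linarith
    _ = n := by simp

lemma one_le_sq_natCast_sub {m n : ℕ} (h : m ≠ n) : (1 : ℝ) ≤ ((m : ℝ) - n) ^ 2 := by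
  have : (1 : ℤ) ≤ ((m : ℤ) - n) ^ 2 :=
    (one_le_sq_iff_one_le_abs _).mpr (Int.one_le_abs (sub_ne_zero.mpr (mod_cast h)))
  exact_mod_cast this

theorem omin_gt_omax_general (T : ℕ) :
    let ms : ℝ := 1 / 4
    let mb : ℝ := 1
    let wb : ℝ := (2 * (T : ℝ) + 5 / 4) ^ 5
    let ws : ℝ := 4 * wb * (1 - 1 / ((T : ℝ) + 5 / 4)) ^ 2
    let Omin : ℕ → ℝ := fun C =>
      ws * (2 - ms / ((C : ℝ) + ms)) + wb * mb / ((C : ℝ) + ms + mb)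
        + (2 * (T : ℝ) - (C : ℝ)) / (2 * (T : ℝ) + ms + mb)
    let Omax : ℕ → ℝ := fun C =>
      ws * (2 - ms / ((C : ℝ) + ms)) + wb * mb / ((C : ℝ) + ms + mb)
        + ∑ i ∈ Finset.Icc 1 (2 * T - C), 1 / ((C : ℝ) + ms + mb + (i : ℝ))
    ∀ K : ℕ, 1 ≤ K → K ≤ T → Omin T > Omax (T + K) ∧ Omin T > Omax (T - K) := by
  intro ms mb wb ws Omin Omax K hK hKT
  have separation : ∀ C ≤ 2 * T, C ≠ T → Omax C < Omin T := by
    intro C hC hCT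
    have gap := le_balanceOverhang_sub (Nat.cast_nonneg C) (by exact_mod_cast hC)
      (one_le_sq_natCast_sub hCT)
    have tail : ∑ i ∈ Icc 1 (2 * T - C), 1 / ((C : ℝ) + ms + mb + i) ≤ 2 * T :=
      (sum_Icc_one_div_add_le (by positivity) _).trans (by exact_mod_cast Nat.sub_le _ _)
    have slack : 0 ≤ (2 * (T : ℝ) - T) / (2 * T + ms + mb) := by
      rw [two_mul, add_sub_cancel_right]; positivity
    change balanceOverhang wb T C + _ < balanceOverhang wb T T + _
    linarith
  exact ⟨separation _ (by omega) (by omega), separation _ (by omega) (by omega)⟩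

/-- Separation lemma for the NP-hardness reduction: the minimum overhang with
perfect-partition counterweight `T` exceeds the maximum overhang with
counterweight `T ± K`. -/
theorem omin_gt_omax (T : ℕ) (hT : 1 ≤ T)
    (k : ℕ) (a : Fin k → ℕ) (ha : ∀ i, 0 < a i) (hsum : ∑ i, a i = 2 * T) :
    let ms : ℝ := 1 / 4
    let mb : ℝ := 1
    let wb : ℝ := (2 * (T : ℝ) + 5 / 4) ^ 5
    let ws : ℝ := 4 * wb * (1 - 1 / ((T : ℝ) + 5 / 4)) ^ 2
    let Omin : ℕ → ℝ := fun C =>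
      ws * (2 - ms / ((C : ℝ) + ms)) + wb * mb / ((C : ℝ) + ms + mb)
        + (2 * (T : ℝ) - (C : ℝ)) / (2 * (T : ℝ) + ms + mb)
    let Omax : ℕ → ℝ := fun C =>
      ws * (2 - ms / ((C : ℝ) + ms)) + wb * mb / ((C : ℝ) + ms + mb)
        + ∑ i ∈ Finset.Icc 1 (2 * T - C), 1 / ((C : ℝ) + ms + mb + (i : ℝ))
    ∀ K : ℕ, 1 ≤ K → K ≤ T → Omin T > Omax (T + K) ∧ Omin T > Omax (T - K) :=
  omin_gt_omax_general T
end

section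
/- With the parameters of the Partition reduction (m_* = 1/4, m_• = 1, w_• = (2T+5/4)^5, w_* = 4w_•(1 − 1/(T+5/4))^2), the following identity holds for all K with 1 ≤ K ≤ T and each sign choice ±: ∓ K·w_*·m_*/((T+m_*)(T±K+m_*)) ± K·w_•·m_•/((T+m_*+m_•)(T±K+m_*+m_•)) = K²·w_•·m_•²/((T+m_*+m_•)²·(T±K+m_*+m_•)·(T±K+m_*)). -/
/-! Once `w_* m_* = w_• m_• a² / (a + m_•)²` with `a = T + m_*`, putting the two fractions over a
common denominator leaves the numerator `S w_• m_• ((a + m_•)(a + S) - a(a + S + m_•)) = S² w_• m_•²`,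
where `S = ±K` is the shift. -/

theorem neg_shifted_fraction_add_shifted_fraction (T S ms mb ws wb : ℝ)
    (hw : ws * ms = wb * mb * (T + ms) ^ 2 / (T + ms + mb) ^ 2)
    (hm : T + ms + mb ≠ 0) (hS : T + S + ms ≠ 0)
    (hSm : T + S + ms + mb ≠ 0) :
    - (S * ws * ms / ((T + ms) * (T + S + ms)))
        + S * wb * mb / ((T + ms + mb) * (T + S + ms + mb))
      = S ^ 2 * wb * mb ^ 2 / ((T + ms + mb) ^ 2 * (T + S + ms + mb) * (T + S + ms)) := by
  rw [mul_assoc S, hw]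
  field_simp
  ring

theorem partition_weight_mul_mass (T : ℝ) (hT : T + 5 / 4 ≠ 0) :
    4 * (2 * T + 5 / 4) ^ 5 * (1 - 1 / (T + 5 / 4)) ^ 2 * (1 / 4)
      = (2 * T + 5 / 4) ^ 5 * 1 * (T + 1 / 4) ^ 2 / (T + 1 / 4 + 1) ^ 2 := by
  have hfrac : 1 - 1 / (T + 5 / 4) = (T + 1 / 4) / (T + 1 / 4 + 1) := by
    rw [show T + 1 / 4 + 1 = T + 5 / 4 by ring, eq_div_iff hT, sub_mul, one_div_mul_cancel hT]
    ring
  rw [hfrac, div_pow]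
  ring

theorem fraction_identity_general (T K : ℝ) (hK1 : 1 ≤ K) (hKT : K ≤ T) :
    let ms : ℝ := 1 / 4
    let mb : ℝ := 1
    let wb : ℝ := (2 * T + 5 / 4) ^ 5
    let ws : ℝ := 4 * wb * (1 - 1 / (T + 5 / 4)) ^ 2
    -- sign choice "+":
    (- (K * ws * ms / ((T + ms) * (T + K + ms)))
        + K * wb * mb / ((T + ms + mb) * (T + K + ms + mb))
      = K ^ 2 * wb * mb ^ 2
        / ((T + ms + mb) ^ 2 * (T + K + ms + mb) * (T + K + ms))) ∧
    -- sign choice "−":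
    (K * ws * ms / ((T + ms) * (T - K + ms))
        - K * wb * mb / ((T + ms + mb) * (T - K + ms + mb))
      = K ^ 2 * wb * mb ^ 2
        / ((T + ms + mb) ^ 2 * (T - K + ms + mb) * (T - K + ms))) := by
  intro ms mb wb ws
  have hw := partition_weight_mul_mass T (by linarith)
  have shifted (S : ℝ) (hS : 0 ≤ T + S) := neg_shifted_fraction_add_shifted_fraction T S ms mb ws wb hw
    (by norm_num [ms, mb]; linarith)
    (by norm_num [ms]; linarith) (by norm_num [ms, mb]; linarith)
  constructor
  · exact shifted K (by linarith)
  · linear_combination shifted (-K) (by linarith)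

/-- The fraction identity used in the proof of `O_min(T) > O_max(T ± K)`,
for both sign choices. -/
theorem fraction_identity (T K : ℝ) (hT : 1 ≤ T) (hK1 : 1 ≤ K) (hKT : K ≤ T) :
    let ms : ℝ := 1 / 4
    let mb : ℝ := 1
    let wb : ℝ := (2 * T + 5 / 4) ^ 5
    let ws : ℝ := 4 * wb * (1 - 1 / (T + 5 / 4)) ^ 2
    -- sign choice "+":
    (- (K * ws * ms / ((T + ms) * (T + K + ms)))
        + K * wb * mb / ((T + ms + mb) * (T + K + ms + mb))
      = K ^ 2 * wb * mb ^ 2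
        / ((T + ms + mb) ^ 2 * (T + K + ms + mb) * (T + K + ms))) ∧
    -- sign choice "−":
    (K * ws * ms / ((T + ms) * (T - K + ms))
        - K * wb * mb / ((T + ms + mb) * (T - K + ms + mb))
      = K ^ 2 * wb * mb ^ 2
        / ((T + ms + mb) ^ 2 * (T - K + ms + mb) * (T - K + ms))) :=
  fraction_identity_general T K hK1 hKT
end

section
/- Let B be a finite set of blocks with half-widths w_i ≥ 0 and masses m_i > 0, let p ∈ B and π a permutation of B (the stacking order, top to bottom). Define M_i = Σ_{j: π(j) ≤ π(i)} m_j, and let OPT = w_p·(2 − m_p/M_p) + Σ_{i: π(i) > π(p)} w_i·m_i/M_i be the overhang of a stack with counterbalancing and protruding block p. Then the fully right-aligned stack obtained by moving p to the top (keeping the relative order of the other blocks) has overhang at least OPT/2. -/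
open Finset Function

/- Moving `p` to the top leaves the mass above every block that was below `p` unchanged, so those
blocks keep their terms `wᵢ mᵢ / Mᵢ`, while `p` itself now contributes its full half-width `w_p`.
Hence the new overhang is at least `w_p + Σ_{i below p} wᵢ mᵢ / Mᵢ`, and `w_p (2 - m_p / M_p) ≤ 2 w_p`
gives the factor two. -/

section MassAbove

variable {ι α : Type*} [Fintype ι] [LinearOrder α]

/-- `σ` ranks the blocks from the top, so this is the mass of `i` together with the blocks on it. -/
def massAbove (σ : ι → α) (m : ι → ℝ) (i : ι) : ℝ :=
  ∑ j ∈ univ.filter (fun j => σ j ≤ σ i), m j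

noncomputable def overhang (σ : ι → α) (w m : ι → ℝ) : ℝ :=
  ∑ i, w i * m i / massAbove σ m i

variable {σ σ' : ι → α} {w m : ι → ℝ} {p : ι}

lemma massAbove_pos (σ : ι → α) (hm : ∀ i, 0 < m i) (i : ι) : 0 < massAbove σ m i :=
  sum_pos (fun j _ => hm j) ⟨i, by simp⟩

lemma mul_div_massAbove_nonneg (σ : ι → α) (hw : ∀ i, 0 ≤ w i) (hm : ∀ i, 0 < m i) (i : ι) :
    0 ≤ w i * m i / massAbove σ m i :=
  div_nonneg (mul_nonneg (hw i) (hm i).le) (massAbove_pos σ hm i).le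

lemma massAbove_of_forall_le (hσ : Injective σ) (htop : ∀ i, σ p ≤ σ i) :
    massAbove σ m p = m p := by
  have : univ.filter (fun j => σ j ≤ σ p) = {p} := by
    ext j
    simpa using ⟨fun h => hσ (le_antisymm h (htop j)), fun h => h ▸ le_rfl⟩
  simp [massAbove, this]

lemma massAbove_eq_of_lt (htop : ∀ i, σ' p ≤ σ' i)
    (hrel : ∀ a b, a ≠ p → b ≠ p → (σ' a < σ' b ↔ σ a < σ b)) {i : ι} (hi : σ p < σ i) :
    massAbove σ' m i = massAbove σ m i := by
  have hip : i ≠ p := by rintro rfl; exact hi.false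
  unfold massAbove
  congr 1
  refine filter_congr fun j _ => ?_
  by_cases hjp : j = p
  · subst hjp
    exact ⟨fun _ => hi.le, fun _ => htop i⟩
  · simpa only [not_lt] using (hrel i j hip hjp).not

lemma add_sum_le_overhang (hw : ∀ i, 0 ≤ w i) (hm : ∀ i, 0 < m i) (hσ' : Injective σ')
    (htop : ∀ i, σ' p ≤ σ' i) (hrel : ∀ a b, a ≠ p → b ≠ p → (σ' a < σ' b ↔ σ a < σ b)) :
    w p + ∑ i ∈ univ.filter (fun i => σ p < σ i), w i * m i / massAbove σ m i
      ≤ overhang σ' w m := by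
  have hp : p ∉ univ.filter (fun i => σ p < σ i) := by simp
  calc w p + ∑ i ∈ univ.filter (fun i => σ p < σ i), w i * m i / massAbove σ m i
      = ∑ i ∈ cons p (univ.filter (fun i => σ p < σ i)) hp, w i * m i / massAbove σ' m i := by
        rw [sum_cons, massAbove_of_forall_le hσ' htop, mul_div_cancel_right₀ _ (hm p).ne']
        congr 1
        exact sum_congr rfl fun i hi => by
          rw [massAbove_eq_of_lt htop hrel (mem_filter.mp hi).2]
    _ ≤ overhang σ' w m :=
        sum_le_sum_of_subset_of_nonneg (subset_univ _) fun i _ _ =>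
          mul_div_massAbove_nonneg σ' hw hm i

end MassAbove

/-- Moving the protruding block `p` to the top (keeping the relative order of
the other blocks) yields a fully right-aligned stack with at least half the
overhang of the original stack with counterbalancing. -/
theorem right_aligned_two_approx (n : ℕ) (w m : Fin n → ℝ)
    (hw : ∀ i, 0 ≤ w i) (hm : ∀ i, 0 < m i) (p : Fin n)
    (π π' : Equiv.Perm (Fin n))
    (htop : ∀ i, π' p ≤ π' i)
    (hrel : ∀ a b, a ≠ p → b ≠ p → (π' a < π' b ↔ π a < π b)) :
    let M : Fin n → ℝ := fun i => ∑ j ∈ Finset.univ.filter (fun j => π j ≤ π i), m j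
    let M' : Fin n → ℝ := fun i => ∑ j ∈ Finset.univ.filter (fun j => π' j ≤ π' i), m j
    (∑ i, w i * m i / M' i)
      ≥ (w p * (2 - m p / M p)
          + ∑ i ∈ Finset.univ.filter (fun i => π p < π i), w i * m i / M i) / 2 := by
  intro M M'
  have hmoved : w p + ∑ i ∈ univ.filter (fun i => π p < π i), w i * m i / M i
      ≤ ∑ i, w i * m i / M' i :=
    add_sum_le_overhang hw hm π'.injective htop hrel
  have hsum : 0 ≤ ∑ i ∈ univ.filter (fun i => π p < π i), w i * m i / M i :=
    sum_nonneg fun i _ => mul_div_massAbove_nonneg π hw hm i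
  have hpM : 0 ≤ w p * (m p / M p) :=
    mul_nonneg (hw p) (div_nonneg (hm p).le (massAbove_pos π hm p).le)
  linarith
end

section
/- Let x̄_i denote the center of gravity of blocks 1 through i in a balanced stack. If for some i ≥ p (p the protruding block) the stack is not right-aligned at i, i.e., x̄_i < x_{i+1} + w_{i+1}, then with d = (x_{i+1} + w_{i+1}) − x̄_i > 0 and δ, ε ∈ (0, d/2] chosen so that δ·m_{i+1} = ε·M_i, shifting block i+1 left by δ and blocks 1,…,i right by ε leaves the combined center of gravity of blocks 1,…,i+1 unchanged, keeps the stack balanced, and strictly increases the overhang. Hence any maximum-overhang stack is right-aligned at all blocks i ≥ p. -/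
open Finset

/-! Moving blocks `0,…,i` right by `ε` and block `i+1` left by `δ` with `δ·m_{i+1} = ε·M_i`
keeps the weighted sum `∑_{j ≤ i+1} m_j x_j`, hence every `x̄_k` with `k > i`, and shifts every
`x̄_k` with `k ≤ i` by `ε`. The only balance condition that could fail is the one at block
`i+1`, where block `i+1` and the center of gravity `x̄_i` approach each other by `δ + ε ≤ d`.
The protruding block moves right by `ε`, so the overhang grows. -/

def shiftStack (x : ℕ → ℝ) (i : ℕ) (ε δ : ℝ) : ℕ → ℝ :=
  fun j => if j ≤ i then x j + ε else if j = i + 1 then x (i + 1) - δ else x j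

section shiftStack

variable {x m : ℕ → ℝ} {i j k : ℕ} {ε δ : ℝ}

theorem shiftStack_of_le (h : j ≤ i) : shiftStack x i ε δ j = x j + ε := if_pos h

theorem shiftStack_succ : shiftStack x i ε δ (i + 1) = x (i + 1) - δ := by
  simp [shiftStack]

theorem shiftStack_of_succ_lt (h : i + 1 < j) : shiftStack x i ε δ j = x j := by
  simp only [shiftStack, if_neg (show ¬j ≤ i by omega), if_neg (show j ≠ i + 1 by omega)]

theorem sum_mul_shiftStack_of_le (hk : k ≤ i) :
    ∑ j ∈ range (k + 1), m j * shiftStack x i ε δ j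
      = ∑ j ∈ range (k + 1), m j * x j + ε * ∑ j ∈ range (k + 1), m j := by
  rw [mul_sum, ← sum_add_distrib]
  refine sum_congr rfl fun j hj => ?_
  rw [shiftStack_of_le (by rw [mem_range] at hj; omega)]
  ring

theorem sum_mul_shiftStack_succ (hδε : δ * m (i + 1) = ε * ∑ j ∈ range (i + 1), m j) :
    ∑ j ∈ range (i + 2), m j * shiftStack x i ε δ j = ∑ j ∈ range (i + 2), m j * x j := by
  rw [sum_range_succ, sum_range_succ (fun j => m j * x j), sum_mul_shiftStack_of_le le_rfl,
    shiftStack_succ]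
  linear_combination -hδε

theorem sum_mul_shiftStack_of_lt (hδε : δ * m (i + 1) = ε * ∑ j ∈ range (i + 1), m j)
    (hk : i < k) :
    ∑ j ∈ range (k + 1), m j * shiftStack x i ε δ j = ∑ j ∈ range (k + 1), m j * x j := by
  induction k, Nat.succ_le_of_lt hk using Nat.le_induction with
  | base => exact sum_mul_shiftStack_succ hδε
  | succ k hik ih =>
    rw [sum_range_succ, ih (by omega), shiftStack_of_succ_lt (by omega), ← sum_range_succ]

end shiftStack

theorem Finset.sup'_lt_sup'_of_le_of_lt {ι α : Type*} [LinearOrder α] {s : Finset ι}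
    (hs : s.Nonempty) {f g : ι → α} {p : ι} (hp : p ∈ s) (hf : ∀ j ∈ s, f j ≤ f p)
    (hfg : f p < g p) : s.sup' hs f < s.sup' hs g :=
  (sup'_le hs f hf).trans_lt (hfg.trans_le (le_sup' g hp))

/-- If a balanced stack (blocks `0,…,n-1`, top to bottom) is not right-aligned
at some block `i ≥ p` (with `p` the protruding block), then the described shift
(block `i+1` left by `δ`, blocks `0,…,i` right by `ε`, where `δ·m_{i+1} = ε·M_i`
and `δ, ε ∈ (0, d/2]`) preserves the combined center of gravity of blocks
`0,…,i+1`, keeps the stack balanced, and strictly increases the overhang. -/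
theorem not_right_aligned_improvable (n : ℕ) (x w m : ℕ → ℝ)
    (hm : ∀ j, 0 < m j)
    (M : ℕ → ℝ) (hM : ∀ k, M k = ∑ j ∈ Finset.range (k + 1), m j)
    (xbar : ℕ → ℝ) (hxbar : ∀ k, xbar k = (∑ j ∈ Finset.range (k + 1), m j * x j) / M k)
    (hbal : ∀ k, k + 1 < n → x (k + 1) - w (k + 1) ≤ xbar k ∧ xbar k ≤ x (k + 1) + w (k + 1))
    (p i : ℕ) (hpi : p ≤ i) (hin : i + 1 < n)
    (hprot : ∀ j, j < n → x j + w j ≤ x p + w p)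
    (d : ℝ) (hd : d = (x (i + 1) + w (i + 1)) - xbar i)
    (δ ε : ℝ) (hδ : 0 < δ) (hδd : δ ≤ d / 2) (hε : 0 < ε) (hεd : ε ≤ d / 2)
    (hδε : δ * m (i + 1) = ε * M i)
    (x' : ℕ → ℝ)
    (hx' : ∀ j, x' j = if j ≤ i then x j + ε else if j = i + 1 then x (i + 1) - δ else x j) :
    -- the center of gravity of blocks 0,…,i+1 is unchanged
    (∑ j ∈ Finset.range (i + 2), m j * x' j) / M (i + 1) = xbar (i + 1) ∧
    -- the shifted stack is still balanced
    (∀ k, k + 1 < n →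
      x' (k + 1) - w (k + 1) ≤ (∑ j ∈ Finset.range (k + 1), m j * x' j) / M k ∧
      (∑ j ∈ Finset.range (k + 1), m j * x' j) / M k ≤ x' (k + 1) + w (k + 1)) ∧
    -- and it has a strictly larger overhang
    ((Finset.range n).sup' (Finset.nonempty_range_iff.mpr (by omega)) (fun j => x j + w j)
      < (Finset.range n).sup' (Finset.nonempty_range_iff.mpr (by omega)) (fun j => x' j + w j)) := by
  obtain rfl : x' = shiftStack x i ε δ := funext hx'
  have hMpos (k : ℕ) : 0 < M k := hM k ▸ sum_pos (fun j _ => hm j) nonempty_range_add_one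
  have hcog_le (k : ℕ) (hk : k ≤ i) :
      (∑ j ∈ range (k + 1), m j * shiftStack x i ε δ j) / M k = xbar k + ε := by
    rw [sum_mul_shiftStack_of_le hk, ← hM, add_div, mul_div_cancel_right₀ _ (hMpos k).ne',
      hxbar]
  have hsum_gt (k : ℕ) (hk : i < k) :
      ∑ j ∈ range (k + 1), m j * shiftStack x i ε δ j = ∑ j ∈ range (k + 1), m j * x j :=
    sum_mul_shiftStack_of_lt (hM i ▸ hδε) hk
  refine ⟨by rw [hsum_gt (i + 1) i.lt_succ_self, hxbar], fun k hk => ?_, ?_⟩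
  · obtain ⟨hlo, hhi⟩ := hbal k hk
    rcases lt_trichotomy k i with hki | rfl | hki
    · rw [hcog_le k hki.le, shiftStack_of_le hki]
      constructor <;> linarith
    · rw [hcog_le k le_rfl, shiftStack_succ]
      constructor <;> linarith
    · rw [shiftStack_of_succ_lt (by omega), hsum_gt k hki, ← hxbar]
      exact hbal k hk
  · refine sup'_lt_sup'_of_le_of_lt _ (mem_range.2 (by omega))
      (fun j hj => hprot j (mem_range.1 hj)) ?_
    rw [shiftStack_of_le hpi]
    linarith
end

section
/- Let J be jobs with Δ_i ≥ 0 (not all zero), o_i > 0, and shift u > 0. Form airplanes A = J ∪ {a_*} with v_i = Δ_i, c_i = o_i for i ∈ J, c_* = u, and v_* = (c_*·max_j v_j / c_•²)·(c_* + Σ_j c_j) where c_• = min(c_*, min_j c_j). Then for any dropout order π* of A in which a_* is dropped last, Σ_{i∈A} v_i/C_i = v_*/c_* + Σ_{i∈J} Δ_i/(u + O_i), where C_i = Σ_{j: π*(j) ≥ π*(i)} c_j and O_i = C_i − c_* for i ∈ J. Hence an ordering of J maximizes Σ_i Δ_i/(u+O_i) if and only if the corresponding dropout order of A (with a_* last)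 maximizes fleet range among orders with a_* last. -/
open Finset

/-!
The auxiliary airplane `a_*` is dropped last, so the only airplane dropped no earlier than it is
itself: `C_* = c_* = u`, and its term is `v_*/u` whatever `v_*` is. For a job `i`, `O_i = C_i - u`
by definition, so `C_i = u + O_i` and its term is `Δ_i/(u + O_i)`. The two objectives therefore
differ by the constant `v_*/u`, which gives the equivalence of the two maximization problems.
-/

theorem Equiv.Perm.filter_apply_le_eq_singleton_of_apply_eq_top {α : Type*} [Fintype α]
    [LinearOrder α] [OrderTop α] (π : Equiv.Perm α) {a : α} (ha : π a = ⊤) :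
    univ.filter (fun j => π a ≤ π j) = {a} := by
  ext j
  simp only [mem_filter, mem_univ, true_and, mem_singleton, ha, top_le_iff]
  exact ⟨fun hj => π.injective (hj.trans ha.symm), fun hj => hj ▸ ha⟩

theorem ras_to_ar_reduction_general (n : ℕ) (hn : 0 < n) (Δ o : Fin n → ℝ)
    (u : ℝ) :
    let cb : ℝ := min u (Finset.univ.inf' ⟨⟨0, hn⟩, Finset.mem_univ _⟩ o)
    let vstar : ℝ := u * (Finset.univ.sup' ⟨⟨0, hn⟩, Finset.mem_univ _⟩ Δ) / cb ^ 2
        * (u + ∑ j, o j)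
    let v : Fin (n + 1) → ℝ := fun i => if h : i = Fin.last n then vstar else Δ (i.castPred h)
    let c : Fin (n + 1) → ℝ := fun i => if h : i = Fin.last n then u else o (i.castPred h)
    let C : Equiv.Perm (Fin (n + 1)) → Fin (n + 1) → ℝ := fun π i =>
      ∑ j ∈ Finset.univ.filter (fun j => π i ≤ π j), c j
    let O : Equiv.Perm (Fin (n + 1)) → Fin n → ℝ := fun π i => C π i.castSucc - u
    (∀ π : Equiv.Perm (Fin (n + 1)), π (Fin.last n) = Fin.last n →
      ∑ i, v i / C π i = vstar / u + ∑ i : Fin n, Δ i / (u + O π i)) ∧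
    (∀ π π' : Equiv.Perm (Fin (n + 1)),
      π (Fin.last n) = Fin.last n → π' (Fin.last n) = Fin.last n →
      (∑ i, v i / C π i ≤ ∑ i, v i / C π' i
        ↔ ∑ i : Fin n, Δ i / (u + O π i) ≤ ∑ i : Fin n, Δ i / (u + O π' i))) := by
  intro cb vstar v c C O
  have range_eq : ∀ π : Equiv.Perm (Fin (n + 1)), π (Fin.last n) = Fin.last n →
      ∑ i, v i / C π i = vstar / u + ∑ i : Fin n, Δ i / (u + O π i) := by
    intro π hπ
    have hC_last : C π (Fin.last n) = u := by
      simp [C, c, π.filter_apply_le_eq_singleton_of_apply_eq_top hπ]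
    rw [Fin.sum_univ_castSucc, add_comm]
    congr 1
    · simp [v, hC_last]
    · refine sum_congr rfl fun i _ => ?_
      simp [v, O, (Fin.castSucc_lt_last i).ne]
  refine ⟨range_eq, fun π π' hπ hπ' => ?_⟩
  rw [range_eq π hπ, range_eq π' hπ']
  exact add_le_add_iff_left _

/-- Reduction from Robust Appointment Scheduling to Airplane Refueling: with
the auxiliary airplane `a_* = Fin.last n` (consumption rate `u`, tank volume
`v_*`) dropped last, the fleet range equals `v_*/u + Σ_i Δ_i/(u+O_i)`; hence,
among dropout orders dropping `a_*` last, maximizing the range is equivalent to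
maximizing `Σ_i Δ_i/(u+O_i)`. -/
theorem ras_to_ar_reduction (n : ℕ) (hn : 0 < n) (Δ o : Fin n → ℝ)
    (hΔ : ∀ i, 0 ≤ Δ i) (hΔne : ∃ i, Δ i ≠ 0) (ho : ∀ i, 0 < o i)
    (u : ℝ) (hu : 0 < u) :
    let cb : ℝ := min u (Finset.univ.inf' ⟨⟨0, hn⟩, Finset.mem_univ _⟩ o)
    let vstar : ℝ := u * (Finset.univ.sup' ⟨⟨0, hn⟩, Finset.mem_univ _⟩ Δ) / cb ^ 2
        * (u + ∑ j, o j)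
    let v : Fin (n + 1) → ℝ := fun i => if h : i = Fin.last n then vstar else Δ (i.castPred h)
    let c : Fin (n + 1) → ℝ := fun i => if h : i = Fin.last n then u else o (i.castPred h)
    let C : Equiv.Perm (Fin (n + 1)) → Fin (n + 1) → ℝ := fun π i =>
      ∑ j ∈ Finset.univ.filter (fun j => π i ≤ π j), c j
    let O : Equiv.Perm (Fin (n + 1)) → Fin n → ℝ := fun π i => C π i.castSucc - u
    (∀ π : Equiv.Perm (Fin (n + 1)), π (Fin.last n) = Fin.last n →
      ∑ i, v i / C π i = vstar / u + ∑ i : Fin n, Δ i / (u + O π i)) ∧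
    (∀ π π' : Equiv.Perm (Fin (n + 1)),
      π (Fin.last n) = Fin.last n → π' (Fin.last n) = Fin.last n →
      (∑ i, v i / C π i ≤ ∑ i, v i / C π' i
        ↔ ∑ i : Fin n, Δ i / (u + O π i) ≤ ∑ i : Fin n, Δ i / (u + O π' i))) :=
  ras_to_ar_reduction_general n hn Δ o u
end
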